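/- Let T = T₁ ∨ T₂ be a tree with |T₁| = n and |T₂| = m (n or m may be 0). A permutation σ ∈ S_{n+m+1} belongs to S_T if and only if σ(n+1) = 1, st((σ(1),…,σ(n))) ∈ S_{T₁}, and st((σ(n+2),…,σ(n+m+1))) ∈ S_{T₂}. -/

import Mathlib

/-!
At a strict minimum `a` the tree splits: `φ(l₁ · a · l₂) = φ(l₁) ∨ φ(l₂)`. Since `φ` only
sees relative order, it is unchanged by any strictly increasing relabelling of a duplicate-free
list, in particular by standardization. In a permutation the entry `1` is the strict minimum,
and `|φ(l)| = length l` forces `1` to sit at position `|T₁| + 1` when `φ(σ) = T₁ ∨ T₂`.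
-/

/-- The minimum of `a :: l` (computed by folding `min`) is a member of `a :: l`. -/
lemma foldr_min_mem (a : ℤ) : ∀ l : List ℤ, l.foldr min a ∈ a :: l := by
  intro l
  induction l with
  | nil => simp
  | cons b l ih =>
    simp only [List.foldr_cons]
    rcases min_choice b (l.foldr min a) with h | h
    · rw [h]; simp
    · rw [h]
      rcases List.mem_cons.mp ih with h' | h'
      · simp [h']
      · simp [h']

/-- The planar binary tree `φ(I)` associated to a list `I` of (distinct) integers:
`φ` of the empty list is the empty tree `|`, and `φ(I) = φ(I₁) ∨ φ(I₂)` where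
`I = I₁ · (min I) · I₂` is the splitting of `I` at its minimal entry. -/
def phi : List ℤ → Tree Unit
  | [] => Tree.nil
  | a :: l =>
    Tree.node ()
      (phi ((a :: l).take ((a :: l).idxOf (l.foldr min a))))
      (phi ((a :: l).drop ((a :: l).idxOf (l.foldr min a) + 1)))
termination_by l => l.length
decreasing_by
  · have hm := foldr_min_mem a l
    have hk := List.idxOf_lt_length_iff.mpr hm
    simp only [List.length_take, List.length_cons, List.foldr_attach] at *
    omega
  · simp only [List.length_drop, List.length_cons]
    omega

/-- The standardization of a list `I` of distinct integers: the list whose `j`-th entry is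
the (1-indexed) position of `I_j` in the increasing ordering of the entries of `I`. -/
def stdz (I : List ℤ) : List ℤ :=
  I.map (fun x => ((I.filter (fun y => y < x)).length : ℤ) + 1)

/-- `l` is (the list of values of) a permutation of `{1, …, n}`. -/
def IsPermList (n : ℕ) (l : List ℤ) : Prop :=
  l.Perm ((List.range n).map (fun k => (k : ℤ) + 1))

/-- `S_T`: the set of permutations `σ ∈ S_{|T|}` (identified with their lists of values
`(σ(1),…,σ(n))`) such that `φ(σ) = T`. -/
def STree (T : Tree Unit) : Set (List ℤ) :=
  {l | IsPermList T.numNodes l ∧ phi l = T}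

lemma foldr_min_le {α : Type*} [LinearOrder α] (a : α) (l : List α) {x : α}
    (hx : x ∈ a :: l) : l.foldr min a ≤ x := by
  induction l with
  | nil => simp_all
  | cons b l ih =>
    rw [List.foldr_cons]
    rcases List.mem_cons.1 hx with rfl | hx
    · exact (min_le_right _ _).trans (ih (by simp))
    · rcases List.mem_cons.1 hx with rfl | hx
      · exact min_le_left _ _
      · exact (min_le_right _ _).trans (ih (List.mem_cons_of_mem _ hx))

theorem numNodes_phi (l : List ℤ) : (phi l).numNodes = l.length := by
  induction l using phi.induct with
  | case1 => simp [phi]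
  | case2 a l ih₁ ih₂ =>
    simp only [List.foldr_attach] at ih₁ ih₂
    have := List.idxOf_lt_length_iff.2 (foldr_min_mem a l)
    rw [phi.eq_2]
    simp only [List.length_cons] at this
    simp only [BinaryTree.numNodes, ih₁, ih₂, List.length_take, List.length_drop,
      List.length_cons]
    omega

theorem phi_append_cons {l₁ l₂ : List ℤ} {a : ℤ} (h : ∀ x ∈ l₁ ++ l₂, a < x) :
    phi (l₁ ++ a :: l₂) = .node () (phi l₁) (phi l₂) := by
  obtain ⟨c, r, hcr⟩ :=
    List.exists_cons_of_ne_nil (List.append_ne_nil_of_right_ne_nil l₁ (List.cons_ne_nil a l₂))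
  have hle : ∀ x ∈ l₁ ++ a :: l₂, a ≤ x := by
    intro x hx
    rcases List.mem_append.1 hx with hx | hx
    · exact (h x (List.mem_append_left _ hx)).le
    · rcases List.mem_cons.1 hx with rfl | hx
      · rfl
      · exact (h x (List.mem_append_right _ hx)).le
  have hmin : r.foldr min c = a :=
    le_antisymm (foldr_min_le c r (by simp [← hcr]))
      (hle _ (hcr ▸ foldr_min_mem c r))
  have hidx : (l₁ ++ a :: l₂).idxOf a = l₁.length := by
    have : a ∉ l₁ := fun ha => (h a (List.mem_append_left _ ha)).false
    simp [List.idxOf_append_of_notMem this]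
  rw [hcr, phi.eq_2, ← hcr, hmin, hidx]
  simp

theorem List.exists_eq_append_cons_forall_lt {α : Type*} [LinearOrder α] {l : List α}
    (hl : l ≠ []) (hnd : l.Nodup) :
    ∃ l₁ a l₂, l = l₁ ++ a :: l₂ ∧ ∀ x ∈ l₁ ++ l₂, a < x := by
  obtain ⟨l₁, l₂, h⟩ := List.append_of_mem (List.min_mem hl)
  refine ⟨l₁, _, l₂, h, fun x hx => lt_of_le_of_ne (List.min_le_of_mem ?_) ?_⟩
  · rw [h]
    rcases List.mem_append.1 hx with hx | hx <;> simp [hx]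
  · rintro rfl
    rw [h, List.nodup_middle] at hnd
    exact (List.nodup_cons.1 hnd).1 hx

theorem phi_map_of_strictMonoOn {f : ℤ → ℤ} {l : List ℤ} (hl : l.Nodup)
    (hf : StrictMonoOn f {x | x ∈ l}) : phi (l.map f) = phi l := by
  induction h : l.length using Nat.strong_induction_on generalizing l with
  | _ n ih =>
  rcases eq_or_ne l [] with rfl | hne
  · rfl
  obtain ⟨l₁, a, l₂, rfl, ha⟩ := l.exists_eq_append_cons_forall_lt hne hl
  have hsub₁ : {x | x ∈ l₁} ⊆ {x | x ∈ l₁ ++ a :: l₂} := fun x hx => by simp_all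
  have hsub₂ : {x | x ∈ l₂} ⊆ {x | x ∈ l₁ ++ a :: l₂} := fun x hx => by simp_all
  have hfa : ∀ y ∈ l₁.map f ++ l₂.map f, f a < y := by
    simp only [List.mem_append, List.mem_map]
    rintro _ (⟨x, hx, rfl⟩ | ⟨x, hx, rfl⟩)
    · exact hf (by simp) (hsub₁ hx) (ha x (List.mem_append_left _ hx))
    · exact hf (by simp) (hsub₂ hx) (ha x (List.mem_append_right _ hx))
  have hlen : l₁.length < n ∧ l₂.length < n := by simp at h; omega
  rw [List.map_append, List.map_cons, phi_append_cons hfa, phi_append_cons ha,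
    ih _ hlen.1 (hl.sublist (List.sublist_append_left _ _)) (hf.mono hsub₁) rfl,
    ih _ hlen.2 (hl.sublist ((List.sublist_cons_self _ _).trans (List.sublist_append_right _ _)))
      (hf.mono hsub₂) rfl]

theorem isPermList_iff {n : ℕ} {l : List ℤ} :
    IsPermList n l ↔ l.Nodup ∧ l.length = n ∧ ∀ x ∈ l, 1 ≤ x ∧ x ≤ n := by
  -- In `IsPermList`, `k` is elaborated as an integer and `List.range n` is cast through the list
  -- monad; `r` is the same list written as a plain `map` over `ℕ`.
  set r := (List.range n).map (fun k : ℕ => (k : ℤ) + 1)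
  have hr : IsPermList n l ↔ l.Perm r := by
    rw [IsPermList]; simp [r, ← List.map_eq_flatMap, Function.comp_def]
  have hmem : ∀ x, x ∈ r ↔ 1 ≤ x ∧ x ≤ n := by
    intro x
    simp only [r, List.mem_map, List.mem_range]
    constructor
    · rintro ⟨k, hk, rfl⟩; omega
    · intro hx; exact ⟨(x - 1).toNat, by omega, by omega⟩
  have hnd : r.Nodup := List.nodup_range.map fun a b h => by simpa using h
  rw [hr]
  constructor
  · intro h
    exact ⟨h.nodup_iff.2 hnd, by simpa [r] using h.length_eq,
      fun x hx => (hmem x).1 (h.mem_iff.1 hx)⟩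
  · rintro ⟨hl, hlen, hrange⟩
    exact (hl.subperm fun x hx => (hmem x).2 (hrange x hx)).perm_of_length_le (by simp [r, hlen])

theorem strictMonoOn_stdz_rank (l : List ℤ) :
    StrictMonoOn (fun x => ((l.filter (fun y => y < x)).length : ℤ) + 1) {x | x ∈ l} := by
  intro x hx y _ hxy
  have hsub : List.Sublist (l.filter (fun z => z < x)) (l.filter (fun z => z < y)) :=
    List.monotone_filter_right l fun z hz => by simp_all; omega
  have hne : l.filter (fun z => z < x) ≠ l.filter (fun z => z < y) := fun h => by
    have : x ∈ l.filter (fun z => z < y) := by simp_all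
    simp [← h] at this
  have := hsub.length_le
  have := mt hsub.eq_of_length hne
  simp only
  omega

theorem phi_stdz {l : List ℤ} (hl : l.Nodup) : phi (stdz l) = phi l :=
  phi_map_of_strictMonoOn hl (strictMonoOn_stdz_rank l)

theorem isPermList_stdz {l : List ℤ} (hl : l.Nodup) : IsPermList l.length (stdz l) := by
  refine isPermList_iff.2 ⟨hl.map_on fun x hx y hy => (strictMonoOn_stdz_rank l).injOn hx hy,
    by simp [stdz], ?_⟩
  simp only [stdz, List.mem_map]
  rintro _ ⟨x, hx, rfl⟩
  have : (l.filter (fun y => y < x)).length < l.length :=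
    List.length_filter_lt_length_iff_exists.2 ⟨x, hx, by simp⟩
  omega

theorem stdz_mem_STree_iff {l : List ℤ} (hl : l.Nodup) {T : Tree Unit} :
    stdz l ∈ STree T ↔ phi l = T := by
  refine ⟨fun h => phi_stdz hl ▸ h.2, fun h => ⟨?_, (phi_stdz hl).trans h⟩⟩
  rw [← h, numNodes_phi]
  exact isPermList_stdz hl

theorem IsPermList.one_mem {n : ℕ} {l : List ℤ} (h : IsPermList (n + 1) l) : (1 : ℤ) ∈ l :=
  (List.Perm.mem_iff h).2 (by simpa using ⟨0, n.zero_le, rfl⟩)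

theorem IsPermList.phi_append_one_cons {n : ℕ} {l₁ l₂ : List ℤ}
    (h : IsPermList n (l₁ ++ 1 :: l₂)) :
    phi (l₁ ++ 1 :: l₂) = .node () (phi l₁) (phi l₂) := by
  obtain ⟨hnd, -, hrange⟩ := isPermList_iff.1 h
  refine phi_append_cons fun x hx => lt_of_le_of_ne (hrange x ?_).1 ?_
  · rcases List.mem_append.1 hx with hx | hx <;> simp [hx]
  · rintro rfl
    exact (List.nodup_cons.1 (List.nodup_middle.1 hnd)).1 hx

/-- Characterization of the permutations associated to a grafted tree `T = T₁ ∨ T₂`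
with `|T₁| = n`, `|T₂| = m`: a permutation `σ ∈ S_{n+m+1}` belongs to `S_T` iff
`σ(n+1) = 1`, `st((σ(1),…,σ(n))) ∈ S_{T₁}` and `st((σ(n+2),…,σ(n+m+1))) ∈ S_{T₂}`. -/
theorem mem_STree_node_iff (T₁ T₂ : Tree Unit) (σ : List ℤ)
    (hσ : IsPermList (T₁.numNodes + T₂.numNodes + 1) σ) :
    σ ∈ STree (Tree.node () T₁ T₂) ↔
      σ[T₁.numNodes]? = some 1 ∧
      stdz (σ.take T₁.numNodes) ∈ STree T₁ ∧
      stdz (σ.drop (T₁.numNodes + 1)) ∈ STree T₂ := by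
  have hnd := (isPermList_iff.1 hσ).1
  rw [show σ ∈ STree (.node () T₁ T₂) ↔ phi σ = .node () T₁ T₂ from and_iff_right hσ]
  constructor
  · intro h
    obtain ⟨l₁, l₂, rfl⟩ := List.append_of_mem hσ.one_mem
    rw [hσ.phi_append_one_cons, BinaryTree.node.injEq] at h
    obtain ⟨-, rfl, rfl⟩ := h
    have hnd' := List.nodup_append.1 (List.nodup_middle.1 hnd).of_cons
    have hlen := numNodes_phi l₁
    simp [hlen, stdz_mem_STree_iff hnd'.1, stdz_mem_STree_iff hnd'.2.1]
  · rintro ⟨hone, h₁, h₂⟩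
    have hsplit : σ = σ.take T₁.numNodes ++ 1 :: σ.drop (T₁.numNodes + 1) := by
      obtain ⟨hk, hσk⟩ := List.getElem?_eq_some_iff.1 hone
      rw [← hσk, List.getElem_cons_drop, List.take_append_drop]
    rw [hsplit] at hσ
    rw [hsplit, hσ.phi_append_one_cons,
      (stdz_mem_STree_iff (hnd.sublist (List.take_sublist _ _))).1 h₁,
      (stdz_mem_STree_iff (hnd.sublist (List.drop_sublist _ _))).1 h₂]
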